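/- arXiv:2109.14000 — 3 statements merged into one kernel-verified Lean document; each statement's English description precedes it below -/
import Mathlib

section
/- If an endemic equilibrium of the SIRS-Vκ system exists, it is unique and given by (S*, I*, R*, V*) = (γ/β, (1-κ-γ/β)/(1+γ/ω), (1-κ-γ/β)/(1+ω/γ), κ). -/
/-- uniqueness of the endemic equilibrium. -/
theorem sirsv_eep_unique
    (β γ ρ ω κ S I R V : ℝ)
    (hβ : 0 < β) (hγ : 0 < γ) (hρ : 0 < ρ) (hω : 0 < ω) (hκ : 0 < κ)
    (heqS : -β * S * I - ρ * (1 - V / κ) * S + ω * R = 0)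
    (heqI : β * S * I - γ * I = 0)
    (heqR : γ * I - ω * R - ρ * (1 - V / κ) * R = 0)
    (heqV : ρ * (1 - V / κ) * (S + R) = 0)
    (hsum : S + I + R + V = 1)
    (hS : S ∈ Set.Icc (0:ℝ) 1) (hIc : I ∈ Set.Icc (0:ℝ) 1)
    (hRc : R ∈ Set.Icc (0:ℝ) 1) (hVc : V ∈ Set.Icc (0:ℝ) 1)
    (hI : 0 < I) :
    S = γ / β ∧ I = (1 - κ - γ / β) / (1 + γ / ω) ∧
      R = (1 - κ - γ / β) / (1 + ω / γ) ∧ V = κ := by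
  -- S = γ/β
  have hSI : (β * S - γ) * I = 0 := by ring_nf; linarith [heqI]
  have hSval : S = γ / β := by
    rcases mul_eq_zero.mp hSI with h | h
    · field_simp; linarith
    · linarith
  have hSpos : 0 < S := hSval ▸ div_pos hγ hβ
  have hRnn : 0 ≤ R := hRc.1
  have hSR : 0 < S + R := by linarith
  have hVval : V = κ := by
    rcases mul_eq_zero.mp heqV with h | h
    · rcases mul_eq_zero.mp h with h' | h'
      · linarith
      · have : V / κ = 1 := by linarith
        field_simp at this; linarith
    · linarith
  have hterm : ρ * (1 - V / κ) = 0 := by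
    rw [hVval]; field_simp; ring
  rw [hterm] at heqR
  have hRval : R = γ * I / ω := by
    field_simp; linarith
  have hIval : I = (1 - κ - γ / β) / (1 + γ / ω) := by
    have hden : 1 + γ / ω > 0 := by positivity
    rw [eq_div_iff (ne_of_gt hden)]
    rw [hSval, hVval, hRval] at hsum
    field_simp at hsum ⊢
    linarith
  refine ⟨hSval, hIval, ?_, hVval⟩
  rw [hRval, hIval]
  have hd1 : (1 : ℝ) + γ / ω ≠ 0 := by positivity
  have hd2 : (1 : ℝ) + ω / γ ≠ 0 := by positivity
  field_simp
  ring
end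

section
/- The point (1 - min(1,κ), 0, 0, min(1,κ)) is an equilibrium of the SIRS-Vκ system, and it is the unique equilibrium with I* = 0 in the admissible state space. -/
/-- (1 - min(1,κ), 0, 0, min(1,κ)) is an equilibrium and is the unique
admissible equilibrium with I = 0. -/
theorem sirsv_dfe_exists_unique
    (β γ ρ ω κ : ℝ)
    (hβ : 0 < β) (hγ : 0 < γ) (hρ : 0 < ρ) (hω : 0 < ω) (hκ : 0 < κ) :
    (let S := 1 - min 1 κ; let I := (0:ℝ); let R := (0:ℝ); let V := min 1 κ;
      -β * S * I - ρ * (1 - V / κ) * S + ω * R = 0 ∧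
      β * S * I - γ * I = 0 ∧
      γ * I - ω * R - ρ * (1 - V / κ) * R = 0 ∧
      ρ * (1 - V / κ) * (S + R) = 0) ∧
    (∀ S I R V : ℝ,
      -β * S * I - ρ * (1 - V / κ) * S + ω * R = 0 →
      β * S * I - γ * I = 0 →
      γ * I - ω * R - ρ * (1 - V / κ) * R = 0 →
      ρ * (1 - V / κ) * (S + R) = 0 →
      S + I + R + V = 1 →
      S ∈ Set.Icc (0:ℝ) 1 → I ∈ Set.Icc (0:ℝ) 1 → R ∈ Set.Icc (0:ℝ) 1 →
      V ∈ Set.Icc (0:ℝ) (min 1 κ) →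
      I = 0 →
      S = 1 - min 1 κ ∧ R = 0 ∧ V = min 1 κ) := by
  constructor
  · rcases le_total κ 1 with h | h
    · have hmin : min 1 κ = κ := min_eq_right h
      simp only [hmin]
      have : 1 - κ / κ = 0 := by field_simp; ring
      rw [this]; ring_nf; simp
    · have hmin : min 1 κ = 1 := min_eq_left h
      simp only [hmin]
      norm_num
  · intro S I R V h1 h2 h3 h4 hsum hS hI hR hV hI0
    subst hI0
    have hρne : ρ ≠ 0 := ne_of_gt hρ
    have h4' : (1 - V / κ) * (S + R) = 0 := by
      have h := mul_eq_zero.mp h4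
      rcases h with h | h
      · rw [(mul_eq_zero.mp h).resolve_left hρne]; ring
      · rw [h]; ring
    rcases mul_eq_zero.mp h4' with hv | hsr
    · -- 1 - V/κ = 0, so V = κ
      have hVκ : V = κ := by
        field_simp at hv
        linarith
      have hmin : min 1 κ = κ := by
        have h1' : V ≤ min 1 κ := hV.2
        have h2' : min 1 κ ≤ κ := min_le_right _ _
        linarith [hVκ ▸ h1']
      have hR0 : R = 0 := by
        have : ω * R = 0 := by
          rw [hv] at h1; linarith [h1]
        exact (mul_eq_zero.mp this).resolve_left (ne_of_gt hω)
      refine ⟨?_, hR0, by rw [hmin, hVκ]⟩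
      rw [hmin]; rw [hR0, hVκ] at hsum; linarith
    · have hS0 : S = 0 := by linarith [hS.1, hR.1]
      have hR0 : R = 0 := by linarith [hS.1, hR.1]
      have hV1 : V = 1 := by rw [hS0, hR0] at hsum; linarith
      have hmin : min 1 κ = 1 := by
        have := hV.2
        have := min_le_left 1 κ
        linarith [hV1 ▸ hV.2]
      exact ⟨by rw [hmin, hS0]; ring, hR0, by rw [hmin, hV1]⟩
end

section
/- The SIRS-Vκ system admits an admissible endemic equilibrium if and only if κ < 1 - γ/β, equivalently (1-κ)·β/γ > 1. -/
/-- an admissible endemic equilibrium exists iff κ < 1 - γ/β,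
equivalently (1-κ)·β/γ > 1. -/
theorem sirsv_eep_exists_iff
    (β γ ρ ω κ : ℝ)
    (hβ : 0 < β) (hγ : 0 < γ) (hρ : 0 < ρ) (hω : 0 < ω) (hκ : 0 < κ) :
    ((∃ S I R V : ℝ,
        -β * S * I - ρ * (1 - V / κ) * S + ω * R = 0 ∧
        β * S * I - γ * I = 0 ∧
        γ * I - ω * R - ρ * (1 - V / κ) * R = 0 ∧
        ρ * (1 - V / κ) * (S + R) = 0 ∧
        S + I + R + V = 1 ∧
        S ∈ Set.Icc (0:ℝ) 1 ∧ I ∈ Set.Icc (0:ℝ) 1 ∧ R ∈ Set.Icc (0:ℝ) 1 ∧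
        V ∈ Set.Icc (0:ℝ) (min 1 κ) ∧ 0 < I)
      ↔ κ < 1 - γ / β) ∧
    (κ < 1 - γ / β ↔ (1 - κ) * β / γ > 1) := by
  constructor
  · constructor
    · rintro ⟨S, I, R, V, _, h2, h3, h4, h5, hS, hI, hR, hV, hIpos⟩
      -- S = γ/β
      have hSI : S = γ / β := by
        have : (β * S - γ) * I = 0 := by linarith [h2]
        rcases mul_eq_zero.1 this with h | h
        · field_simp; linarith
        · exact absurd h (ne_of_gt hIpos)
      have hSpos : 0 < S := hSI ▸ div_pos hγ hβ
      -- V = κ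
      have hVκ : V = κ := by
        have hSR : 0 < S + R := by linarith [hR.1]
        have : ρ * (1 - V / κ) = 0 := by
          rcases mul_eq_zero.1 h4 with h | h
          · exact h
          · linarith
        have h1 : (1 - V / κ) = 0 := by
          rcases mul_eq_zero.1 this with h | h
          · exact absurd h (ne_of_gt hρ)
          · exact h
        have : V / κ = 1 := by linarith
        field_simp at this; linarith
      -- from h3 : γ I = ω R
      have hRI : ω * R = γ * I := by
        rw [hVκ] at h3
        have h0 : (1 - κ / κ) = 0 := by field_simp; ring
        rw [h0] at h3; linarith
      have hRpos : 0 < R := by nlinarith [mul_pos hγ hIpos]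
      -- sum
      have hsum : γ / β + I + R + κ = 1 := by rw [← hSI, ← hVκ]; exact h5
      nlinarith
    · intro hκlt
      have hγβ : γ / β < 1 - κ := by linarith
      have hγβpos : 0 < γ / β := div_pos hγ hβ
      set I : ℝ := (1 - κ - γ / β) / (1 + γ / ω) with hIdef
      have hden : 0 < 1 + γ / ω := by positivity
      have hIpos : 0 < I := div_pos (by linarith) hden
      set R : ℝ := γ * I / ω with hRdef
      have hRpos : 0 < R := by positivity
      have hRIω : ω * R = γ * I := by rw [hRdef]; field_simp
      have hIR : I + R = 1 - κ - γ / β := by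
        have : I * (1 + γ / ω) = 1 - κ - γ / β := by
          rw [hIdef]; field_simp
        have h2 : I + R = I * (1 + γ / ω) := by
          rw [hRdef]; field_simp
        linarith
      refine ⟨γ / β, I, R, κ, ?_, ?_, ?_, ?_, ?_, ?_, ?_, ?_, ?_, hIpos⟩
      · have : (1 - κ / κ) = 0 := by field_simp; ring
        rw [this]
        have : β * (γ / β) = γ := by field_simp
        nlinarith
      · have : β * (γ / β) = γ := by field_simp
        nlinarith
      · have : (1 - κ / κ) = 0 := by field_simp; ring
        rw [this]; nlinarith
      · have : (1 - κ / κ) = 0 := by field_simp; ring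
        rw [this]; ring
      · linarith
      · exact ⟨le_of_lt hγβpos, by linarith⟩
      · exact ⟨le_of_lt hIpos, by linarith⟩
      · exact ⟨le_of_lt hRpos, by linarith⟩
      · exact ⟨le_of_lt hκ, le_min (by linarith) le_rfl⟩
  · constructor
    · intro h
      rw [gt_iff_lt, lt_div_iff₀ hγ]
      have := (div_lt_iff₀ hβ).1 (show γ / β < 1 - κ by linarith)
      nlinarith
    · intro h
      rw [gt_iff_lt, lt_div_iff₀ hγ] at h
      have : γ / β < 1 - κ := (div_lt_iff₀ hβ).2 (by nlinarith)
      linarith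
end
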